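/- arXiv:2303.01066 — 3 statements merged into one kernel-verified Lean document; each statement's English description precedes it below -/
import Mathlib

section
/- Every element of G has a left inverse for ⊕, given explicitly by: for x ∈ P, (⊖x) ⊕ x = 0 where ⊖x ∈ P is the unique element with ⊖x ≡ −x (mod m); and for x = t + m ∈ H with t ∈ P, (⊖x) ⊕ x = 0 where ⊖x = (−t mod m) + m ∈ H. -/
open scoped Classical

noncomputable section

/-- `m = 2^(n-1)` -/
def m (n : ℕ) : ℤ := 2 ^ (n - 1)

/-- `P = {0, 1, ..., m-1}` -/
def Pset (n : ℕ) : Set ℤ := {x | 0 ≤ x ∧ x < m n}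

/-- `H = {m, m+1, ..., 2m-1}` -/
def Hset (n : ℕ) : Set ℤ := {x | m n ≤ x ∧ x < 2 * m n}

/-- `G = {0, 1, ..., 2^n - 1}` -/
def Gset (n : ℕ) : Set ℤ := {x | 0 ≤ x ∧ x < 2 ^ n}

/-- odd elements of `P` -/
def OP (n : ℕ) : Set ℤ := {x | x ∈ Pset n ∧ Odd x}

/-- even elements of `P` -/
def EP (n : ℕ) : Set ℤ := {x | x ∈ Pset n ∧ Even x}

/-- odd elements of `H` -/
def OH (n : ℕ) : Set ℤ := {x | x ∈ Hset n ∧ Odd x}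

/-- even elements of `H` -/
def EH (n : ℕ) : Set ℤ := {x | x ∈ Hset n ∧ Even x}

/-- The binary operation `⊕` on `G`.  Here `(i+j) % m n` is the unique `t ∈ P` with
`t ≡ i + j (mod m)` and `(i+j+m/2) % m n` is the unique `s ∈ P` with `s ≡ i+j+m/2 (mod m)`. -/
def oplus (n : ℕ) (i j : ℤ) : ℤ :=
  if i ∈ EH n ∧ j ∈ OH n then (i + j + m n / 2) % m n
  else if i ∈ EH n ∧ j ∈ OP n then (i + j + m n / 2) % m n + m n
  else if (i ∈ Pset n ∧ j ∈ Pset n) ∨ (i ∈ Hset n ∧ j ∈ Hset n) then (i + j) % m n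
  else (i + j) % m n + m n

/-- The map `A : G → G`; `(i + m/2) % m n` is the unique `r ∈ P` with `r ≡ i + m/2 (mod m)`. -/
def Amap (n : ℕ) (i : ℤ) : ℤ :=
  if i ∈ OP n then (i + m n / 2) % m n
  else if i ∈ OH n then (i + m n / 2) % m n + m n
  else i

/-- `M = (O_P × (O_H ∪ E_H)) ∪ (O_H × (O_P ∪ E_H)) ∪ (E_H × (O_P ∪ O_H))` -/
def Mset (n : ℕ) : Set (ℤ × ℤ) :=
  (OP n ×ˢ (OH n ∪ EH n)) ∪ (OH n ×ˢ (OP n ∪ EH n)) ∪ (EH n ×ˢ (OP n ∪ OH n))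

/-- `gyr(a,b) = A` if `(a,b) ∈ M`, and the identity otherwise. -/
def gyr (n : ℕ) (a b : ℤ) : ℤ → ℤ :=
  if (a, b) ∈ Mset n then Amap n else id

/-! Both `⊖x` and `x` lie in the same block (`P` or `H`), so `⊖x ⊕ x` is plain addition mod `m`
unless `(⊖x, x) ∈ E_H × O_H`; this exceptional case cannot occur, since for even `m` the
elements `(-t) % m + m` and `t + m` have the same parity. -/

lemma m_pos (n : ℕ) : 0 < m n := by
  unfold m
  positivity

lemma even_m {n : ℕ} (hn : 2 ≤ n) : Even (m n) :=
  (Int.even_pow' (by omega)).mpr even_two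

lemma emod_m_mem_Pset (n : ℕ) (x : ℤ) : x % m n ∈ Pset n :=
  ⟨Int.emod_nonneg x (m_pos n).ne', Int.emod_lt_of_pos x (m_pos n)⟩

lemma add_m_mem_Hset {n : ℕ} {t : ℤ} (ht : t ∈ Pset n) : t + m n ∈ Hset n := by
  obtain ⟨ht0, ht1⟩ := ht
  constructor <;> omega

lemma notMem_Hset_of_mem_Pset {n : ℕ} {i : ℤ} (hi : i ∈ Pset n) : i ∉ Hset n :=
  fun h => (not_le.mpr hi.2) h.1

lemma notMem_Pset_of_mem_Hset {n : ℕ} {i : ℤ} (hi : i ∈ Hset n) : i ∉ Pset n :=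
  fun h => notMem_Hset_of_mem_Pset h hi

lemma oplus_of_mem_Pset {n : ℕ} {i j : ℤ} (hi : i ∈ Pset n) (hj : j ∈ Pset n) :
    oplus n i j = (i + j) % m n := by
  have hiH := notMem_Hset_of_mem_Pset hi
  unfold oplus
  rw [if_neg (fun h => hiH h.1.1), if_neg (fun h => hiH h.1.1), if_pos (Or.inl ⟨hi, hj⟩)]

lemma oplus_of_mem_Hset {n : ℕ} {i j : ℤ} (hi : i ∈ Hset n) (hj : j ∈ Hset n)
    (hij : Even i ↔ Even j) : oplus n i j = (i + j) % m n := by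
  have hEO : ¬(i ∈ EH n ∧ j ∈ OH n) := fun ⟨⟨_, hie⟩, _, hjo⟩ =>
    Int.not_even_iff_odd.mpr hjo (hij.mp hie)
  unfold oplus
  rw [if_neg hEO, if_neg (fun h => notMem_Pset_of_mem_Hset hj h.2.1),
    if_pos (Or.inr ⟨hi, hj⟩)]

lemma even_emod_m_iff {n : ℕ} (hn : 2 ≤ n) (x : ℤ) : Even (x % m n) ↔ Even x := by
  rw [Int.even_iff, Int.even_iff, Int.emod_emod_of_dvd x (even_m hn).two_dvd]

/-- explicit left inverses for `⊕`. -/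
theorem stmt6 (n : ℕ) (hn : 3 ≤ n) :
    (∀ x ∈ Pset n, oplus n ((-x) % m n) x = 0) ∧
      (∀ t ∈ Pset n, oplus n ((-t) % m n + m n) (t + m n) = 0) := by
  constructor
  · intro x hx
    rw [oplus_of_mem_Pset (emod_m_mem_Pset n (-x)) hx, Int.emod_add_emod, neg_add_cancel,
      Int.zero_emod]
  · intro t ht
    have hparity : Even ((-t) % m n + m n) ↔ Even (t + m n) := by
      simp only [Int.even_add, even_emod_m_iff (by omega : 2 ≤ n), even_neg]
    rw [oplus_of_mem_Hset (add_m_mem_Hset (emod_m_mem_Pset n (-t))) (add_m_mem_Hset ht) hparity,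
      add_add_add_comm, ← two_mul, Int.add_mul_emod_self_right, Int.emod_add_emod, neg_add_cancel,
      Int.zero_emod]
end
end

section
/- The left loop property holds: for all a, b ∈ G, gyr(a ⊕ b, b) = gyr(a, b) (equality of maps G → G). -/
open scoped Classical

noncomputable section

/-
Record each `x ∈ G` by its class `(x ∈ H, x mod 2)` in the Klein four-group `V = (ℤ/2)²`, so that
`E_P, O_P, E_H, O_H` become `(0,0), (0,1), (1,0), (1,1)`. Because `4 ∣ m`, the operation `⊕` maps
to addition in `V`, and `M` is the set of pairs of distinct nonzero classes. Hence
`(a ⊕ b, b) ∈ M ↔ (a, b) ∈ M`: with `u, v` the classes of `a, b`, the conditions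
`u + v ≠ 0, v ≠ 0, u + v ≠ v` say exactly `u ≠ v, v ≠ 0, u ≠ 0`, as `V` has exponent 2.
Both sides of the left loop property are therefore the same branch of `gyr`.
-/

theorem add_ne_zero_and_ne_iff_of_add_self {V : Type*} [AddGroup V] (hV : ∀ v : V, v + v = 0)
    (x y : V) :
    (x + y ≠ 0 ∧ y ≠ 0 ∧ x + y ≠ y) ↔ (x ≠ 0 ∧ y ≠ 0 ∧ x ≠ y) := by
  have hsum : x + y = 0 ↔ x = y := by
    rw [add_eq_zero_iff_eq_neg, neg_eq_of_add_eq_zero_right (hV y)]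
  simp only [ne_eq, hsum, add_eq_right]
  tauto

lemma four_dvd_m {n : ℕ} (hn : 3 ≤ n) : 4 ∣ m n := by
  obtain ⟨k, hk⟩ := Nat.exists_eq_add_of_le (show 2 ≤ n - 1 by omega)
  exact ⟨2 ^ k, by rw [m, hk, pow_add]; norm_num⟩

lemma two_pow_eq_two_mul_m {n : ℕ} (hn : 1 ≤ n) : (2 : ℤ) ^ n = 2 * m n := by
  rw [m, ← pow_succ', Nat.sub_add_cancel hn]

lemma oplus_mem_Gset {n : ℕ} (hn : 1 ≤ n) (a b : ℤ) : oplus n a b ∈ Gset n := by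
  have ht := emod_m_mem_Pset n (a + b)
  have hs := emod_m_mem_Pset n (a + b + m n / 2)
  simp only [Pset, Gset, Set.mem_ofPred_eq, two_pow_eq_two_mul_m hn, oplus] at ht hs ⊢
  split_ifs <;> omega

lemma oplus_intCast_zmod_two {n : ℕ} (hn : 3 ≤ n) (a b : ℤ) :
    ((oplus n a b : ℤ) : ZMod 2) = a + b := by
  obtain ⟨k, hk⟩ := four_dvd_m hn
  have h2 : (2 : ℤ) ∣ m n := ⟨2 * k, by omega⟩
  have h1 := Int.emod_emod_of_dvd (a + b) h2
  have h3 := Int.emod_emod_of_dvd (a + b + m n / 2) h2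
  -- the shift by `m / 2` in the `E_H × O_P` and `E_H × O_H` cases is even since `4 ∣ m`
  rw [← Int.cast_add, ZMod.intCast_eq_intCast_iff']
  unfold oplus
  split_ifs <;> omega

lemma le_oplus_iff {n : ℕ} (hn : 1 ≤ n) {a b : ℤ} (ha : a ∈ Gset n) (hb : b ∈ Gset n) :
    m n ≤ oplus n a b ↔ ¬(m n ≤ a ↔ m n ≤ b) := by
  have ht := emod_m_mem_Pset n (a + b)
  have hs := emod_m_mem_Pset n (a + b + m n / 2)
  simp only [Gset, Set.mem_ofPred_eq, two_pow_eq_two_mul_m hn] at ha hb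
  simp only [oplus, EH, OH, OP, Pset, Hset, Set.mem_ofPred_eq] at ht hs ⊢
  split_ifs <;> omega

def kleinClass (n : ℕ) (x : ℤ) : ZMod 2 × ZMod 2 :=
  (if m n ≤ x then 1 else 0, x)

lemma kleinClass_oplus {n : ℕ} (hn : 3 ≤ n) {a b : ℤ} (ha : a ∈ Gset n) (hb : b ∈ Gset n) :
    kleinClass n (oplus n a b) = kleinClass n a + kleinClass n b := by
  refine Prod.ext ?_ (oplus_intCast_zmod_two hn a b)
  simp only [kleinClass, Prod.fst_add, le_oplus_iff (by omega) ha hb]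
  split_ifs <;> first | decide | tauto

section kleinClass

variable {n : ℕ} (hn : 1 ≤ n) {x : ℤ} (hx : x ∈ Gset n)
include hn hx

lemma mem_OP_iff_kleinClass : x ∈ OP n ↔ kleinClass n x = (0, 1) := by
  simp only [Gset, Set.mem_ofPred_eq, two_pow_eq_two_mul_m hn] at hx
  simp only [OP, Pset, kleinClass, Set.mem_ofPred_eq, Prod.mk.injEq, ZMod.intCast_eq_one_iff_odd,
    Int.odd_iff, ite_eq_right_iff, one_ne_zero, imp_false]
  omega

lemma mem_OH_iff_kleinClass : x ∈ OH n ↔ kleinClass n x = (1, 1) := by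
  simp only [Gset, Set.mem_ofPred_eq, two_pow_eq_two_mul_m hn] at hx
  simp only [OH, Hset, kleinClass, Set.mem_ofPred_eq, Prod.mk.injEq, ZMod.intCast_eq_one_iff_odd,
    Int.odd_iff, ite_eq_left_iff, zero_ne_one, imp_false, not_not]
  omega

lemma mem_EH_iff_kleinClass : x ∈ EH n ↔ kleinClass n x = (1, 0) := by
  simp only [Gset, Set.mem_ofPred_eq, two_pow_eq_two_mul_m hn] at hx
  simp only [EH, Hset, kleinClass, Set.mem_ofPred_eq, Prod.mk.injEq, ZMod.intCast_eq_zero_iff_even,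
    Int.even_iff, ite_eq_left_iff, zero_ne_one, imp_false, not_not]
  omega

end kleinClass

lemma mem_Mset_iff {n : ℕ} (hn : 1 ≤ n) {x y : ℤ} (hx : x ∈ Gset n) (hy : y ∈ Gset n) :
    (x, y) ∈ Mset n ↔
      kleinClass n x ≠ 0 ∧ kleinClass n y ≠ 0 ∧ kleinClass n x ≠ kleinClass n y := by
  simp only [Mset, Set.mem_union, Set.mem_prod, mem_OP_iff_kleinClass hn hx,
    mem_OH_iff_kleinClass hn hx, mem_EH_iff_kleinClass hn hx, mem_OP_iff_kleinClass hn hy,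
    mem_OH_iff_kleinClass hn hy, mem_EH_iff_kleinClass hn hy]
  generalize kleinClass n x = u
  generalize kleinClass n y = v
  revert u v
  decide

/-- the left loop property. -/
theorem stmt9 (n : ℕ) (hn : 3 ≤ n) :
    ∀ a ∈ Gset n, ∀ b ∈ Gset n,
      gyr n (oplus n a b) b = gyr n a b := by
  intro a ha b hb
  have hn1 : 1 ≤ n := by omega
  have hM : (oplus n a b, b) ∈ Mset n ↔ (a, b) ∈ Mset n := by
    rw [mem_Mset_iff hn1 (oplus_mem_Gset hn1 a b) hb, mem_Mset_iff hn1 ha hb,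
      kleinClass_oplus hn ha hb]
    exact add_ne_zero_and_ne_iff_of_add_self (by decide) _ _
  simp only [gyr, hM]
end
end

section
/- A subset K ⊆ G is a subgyrogroup of (G, ⊕) if and only if K has one of the following forms: (1) K = {(k·2^s) mod m : k ∈ ℤ} ⊆ P for some 0 ≤ s ≤ n−1; (2) K = {(k·2^s) mod m : k ∈ ℤ} ∪ {m + ((k·2^s) mod m) : k ∈ ℤ} for some 0 ≤ s ≤ n−1; (3) K = {(k·2^(s+1)) mod m : k ∈ ℤ} ∪ {m + ((2^s + k·2^(s+1)) mod m) : k ∈ ℤ} for some 0 ≤ s ≤ n−2. -/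
/-!
The twist in `⊕` and the nontrivial gyrations only involve odd elements. A subgyrogroup `K`
meets `P` in a subgroup of `ℤ/m`, i.e. in the multiples of some `2^s`. If `K` meets `H` at
some `h`, then sums of two elements of `K ∩ H` land in `K ∩ P` and translating `h` by
`K ∩ P` stays in `K`, so `K ∩ H` is the coset `h + 2^s ℤ` and `2^s ∣ 2h`. As `2^s ∣ 2m`,
either `2^s ∣ h - m`, or `s = σ + 1` and `2^(σ+1) ∣ h - m - 2^σ`. Conversely, for `s > 0`
the elements of such a set lying in `P` are even and those lying in `H` all have the same
parity, so inside it `⊕` is untwisted addition mod `m` and every gyration is trivial; for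
`s = 0` the set is all of `G`.
-/

open scoped Classical

noncomputable section

/-- `K` is a subgyrogroup of `(G, ⊕)`: contains `0`, closed under `⊕`, contains left
inverses, and is closed under the gyroautomorphisms it generates. -/
def IsSubgyrogroup (n : ℕ) (K : Set ℤ) : Prop :=
  0 ∈ K ∧ (∀ a ∈ K, ∀ b ∈ K, oplus n a b ∈ K) ∧
    (∀ a ∈ K, ∃ b ∈ K, oplus n b a = 0) ∧
    (∀ a ∈ K, ∀ b ∈ K, ∀ c ∈ K, gyr n a b c ∈ K)

lemma AddSubgroup.exists_mem_iff_two_pow_dvd (T : AddSubgroup ℤ) {k : ℕ} (hk : (2 : ℤ) ^ k ∈ T) :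
    ∃ s ≤ k, ∀ y, y ∈ T ↔ (2 : ℤ) ^ s ∣ y := by
  obtain ⟨g, rfl⟩ := Int.subgroup_cyclic T
  simp only [← AddSubgroup.zmultiples_eq_closure, Int.mem_zmultiples_iff] at hk ⊢
  obtain ⟨s, hs, hg⟩ := (Nat.dvd_prime_pow Nat.prime_two).1 (Int.natAbs_dvd_natAbs.2 hk |>.trans
    (by rw [Int.natAbs_pow]; rfl))
  exact ⟨s, hs, fun y => by rw [← Int.natAbs_dvd, hg]; push_cast; rfl⟩

namespace TwistedGyrogroup

variable {n : ℕ}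

def pMultiples (n : ℕ) (d : ℤ) : Set ℤ := {x | x ∈ Pset n ∧ d ∣ x}

def hCoset (n : ℕ) (d c : ℤ) : Set ℤ := {x | x ∈ Hset n ∧ d ∣ x - c}

lemma m_pos : 0 < m n := by
  unfold m; positivity

lemma m_eq_one_or_even : m n = 1 ∨ Even (m n) := by
  unfold m
  rcases Nat.eq_zero_or_pos (n - 1) with h | h
  · simp [h]
  · exact Or.inr (Int.even_pow.2 ⟨even_two, h.ne'⟩)

lemma two_pow_dvd_m {s : ℕ} (hs : s ≤ n - 1) : (2 : ℤ) ^ s ∣ m n :=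
  pow_dvd_pow 2 hs

lemma Gset_subset_Pset_union_Hset : Gset n ⊆ Pset n ∪ Hset n := by
  rintro x ⟨hx0, hxn⟩
  have : (2 : ℤ) ^ n ≤ 2 * m n := by
    unfold m
    rw [← pow_succ']
    exact pow_le_pow_right₀ (by norm_num) (by omega)
  by_cases hx : x < m n
  · exact Or.inl ⟨hx0, hx⟩
  · exact Or.inr ⟨by omega, by omega⟩

lemma notMem_Hset_of_mem_Pset {x : ℤ} (hx : x ∈ Pset n) : x ∉ Hset n :=
  fun h => h.1.not_gt hx.2

lemma emod_mem_Pset (x : ℤ) : x % m n ∈ Pset n :=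
  ⟨Int.emod_nonneg _ m_pos.ne', Int.emod_lt_of_pos _ m_pos⟩

lemma emod_add_m_mem_Hset (x : ℤ) : x % m n + m n ∈ Hset n := by
  obtain ⟨h0, h1⟩ := emod_mem_Pset (n := n) x
  exact ⟨by omega, by omega⟩

lemma emod_m_eq_of_mem_Hset {x : ℤ} (hx : x ∈ Hset n) : x % m n = x - m n := by
  have h := Int.emod_eq_of_lt (a := x - m n) (b := m n) (by linarith [hx.1]) (by linarith [hx.2])
  rwa [Int.sub_emod, Int.emod_self, sub_zero, Int.emod_emod] at h

lemma dvd_emod_sub_iff {d x y : ℤ} (hd : d ∣ m n) : d ∣ x % m n - y ↔ d ∣ x - y := by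
  rw [Int.emod_def, show x - m n * (x / m n) - y = x - y - m n * (x / m n) by ring]
  exact dvd_sub_left (hd.mul_right _)

lemma dvd_emod_iff {d x : ℤ} (hd : d ∣ m n) : d ∣ x % m n ↔ d ∣ x := by
  simpa using dvd_emod_sub_iff (x := x) (y := 0) hd

lemma emod_add_m_mem_hCoset {d c x : ℤ} (hd : d ∣ m n) (h : d ∣ x - c) :
    x % m n + m n ∈ hCoset n d (m n + c) := by
  refine ⟨emod_add_m_mem_Hset x, ?_⟩
  rwa [show x % m n + m n - (m n + c) = x % m n - c by ring, dvd_emod_sub_iff hd]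

lemma pMultiples_one : pMultiples n 1 = Pset n := by
  simp [pMultiples]

lemma hCoset_one (c : ℤ) : hCoset n 1 c = Hset n := by
  simp [hCoset]

lemma hCoset_congr {d c c' : ℤ} (h : d ∣ c - c') : hCoset n d c = hCoset n d c' := by
  ext x
  refine and_congr_right fun _ => ?_
  rw [show x - c = x - c' - (c - c') by ring]
  exact dvd_sub_left h

lemma setOf_mul_emod_eq_pMultiples {d : ℤ} (hd : d ∣ m n) :
    {x : ℤ | ∃ k : ℤ, x = (k * d) % m n} = pMultiples n d := by
  ext x
  constructor
  · rintro ⟨k, rfl⟩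
    exact ⟨emod_mem_Pset _, (dvd_emod_iff hd).2 (dvd_mul_left d k)⟩
  · rintro ⟨hx, k, rfl⟩
    exact ⟨k, by rw [mul_comm k, Int.emod_eq_of_lt hx.1 hx.2]⟩

lemma setOf_add_mul_emod_eq_hCoset {d : ℤ} (hd : d ∣ m n) (c : ℤ) :
    {x : ℤ | ∃ k : ℤ, x = m n + (c + k * d) % m n} = hCoset n d (m n + c) := by
  ext x
  constructor
  · rintro ⟨k, rfl⟩
    refine ⟨by rw [add_comm]; exact emod_add_m_mem_Hset _, ?_⟩
    rw [show m n + (c + k * d) % m n - (m n + c) = (c + k * d) % m n - c by ring,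
      dvd_emod_sub_iff hd, add_sub_cancel_left]
    exact dvd_mul_left d k
  · rintro ⟨hx, k, hk⟩
    refine ⟨k, ?_⟩
    rw [show c + k * d = x - m n by linear_combination -hk, Int.emod_eq_of_lt (by linarith [hx.1])
      (by linarith [hx.2])]
    ring

lemma two_pow_dvd_or_of_dvd_two_mul {s : ℕ} {c : ℤ} (h : (2 : ℤ) ^ s ∣ 2 * c) :
    (2 : ℤ) ^ s ∣ c ∨ ∃ σ, s = σ + 1 ∧ (2 : ℤ) ^ (σ + 1) ∣ c - 2 ^ σ := by
  rcases s with _ | σ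
  · simp
  obtain ⟨q, rfl⟩ : (2 : ℤ) ^ σ ∣ c := by
    rw [pow_succ'] at h
    exact (mul_dvd_mul_iff_left two_ne_zero).1 h
  rcases Int.even_or_odd q with ⟨r, rfl⟩ | ⟨r, rfl⟩
  · exact Or.inl ⟨r, by ring⟩
  · exact Or.inr ⟨σ, rfl, r, by ring⟩

variable {i j : ℤ}

lemma oplus_Pset_Pset (hi : i ∈ Pset n) (hj : j ∈ Pset n) : oplus n i j = (i + j) % m n := by
  rw [oplus, if_neg (fun h => notMem_Hset_of_mem_Pset hi h.1.1),
    if_neg (fun h => notMem_Hset_of_mem_Pset hi h.1.1), if_pos (Or.inl ⟨hi, hj⟩)]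

lemma oplus_Pset_Hset (hi : i ∈ Pset n) (hj : j ∈ Hset n) :
    oplus n i j = (i + j) % m n + m n := by
  rw [oplus, if_neg (fun h => notMem_Hset_of_mem_Pset hi h.1.1),
    if_neg (fun h => notMem_Hset_of_mem_Pset hi h.1.1), if_neg]
  rintro (⟨-, hj'⟩ | ⟨hi', -⟩)
  · exact notMem_Hset_of_mem_Pset hj' hj
  · exact notMem_Hset_of_mem_Pset hi hi'

lemma oplus_Hset_Pset (hi : i ∈ Hset n) (hj : j ∈ Pset n) (hne : ¬(i ∈ EH n ∧ j ∈ OP n)) :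
    oplus n i j = (i + j) % m n + m n := by
  rw [oplus, if_neg (fun h => notMem_Hset_of_mem_Pset hj h.2.1), if_neg hne, if_neg]
  rintro (⟨hi', -⟩ | ⟨-, hj'⟩)
  · exact notMem_Hset_of_mem_Pset hi' hi
  · exact notMem_Hset_of_mem_Pset hj hj'

lemma oplus_EH_OP (hi : i ∈ EH n) (hj : j ∈ OP n) :
    oplus n i j = (i + j + m n / 2) % m n + m n := by
  rw [oplus, if_neg (fun h => notMem_Hset_of_mem_Pset hj.1 h.2.1), if_pos ⟨hi, hj⟩]

lemma oplus_Hset_Hset (hi : i ∈ Hset n) (hj : j ∈ Hset n) (hne : ¬(i ∈ EH n ∧ j ∈ OH n)) :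
    oplus n i j = (i + j) % m n := by
  rw [oplus, if_neg hne, if_neg (fun h => notMem_Hset_of_mem_Pset h.2.1 hj),
    if_pos (Or.inr ⟨hi, hj⟩)]

lemma oplus_mem_Pset_union_Hset (i j : ℤ) : oplus n i j ∈ Pset n ∪ Hset n := by
  unfold oplus
  split_ifs
  all_goals first
    | exact Or.inl (emod_mem_Pset _)
    | exact Or.inr (emod_add_m_mem_Hset _)

lemma oplus_mem_Hset_of_mem_Hset_of_mem_Pset (hi : i ∈ Hset n) (hj : j ∈ Pset n) :
    oplus n i j ∈ Hset n := by
  by_cases htw : i ∈ EH n ∧ j ∈ OP n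
  · rw [oplus_EH_OP htw.1 htw.2]; exact emod_add_m_mem_Hset _
  · rw [oplus_Hset_Pset hi hj htw]; exact emod_add_m_mem_Hset _

lemma oplus_neg_emod_self (hj : j ∈ Pset n) : oplus n ((-j) % m n) j = 0 := by
  rw [oplus_Pset_Pset (emod_mem_Pset _) hj, Int.emod_add_emod, neg_add_cancel, Int.zero_emod]

lemma oplus_neg_emod_add_m_self (hj : j ∈ Hset n) : oplus n ((-j) % m n + m n) j = 0 := by
  have hdvd : m n ∣ (-j) % m n + j := by
    rw [Int.dvd_iff_emod_eq_zero, Int.emod_add_emod, neg_add_cancel, Int.zero_emod]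
  have hne : ¬((-j) % m n + m n ∈ EH n ∧ j ∈ OH n) := by
    rintro ⟨⟨hiH, hi⟩, -, hj⟩
    rcases m_eq_one_or_even (n := n) with h1 | hm
    · -- `H = {1}` has no even element
      obtain ⟨r, hr⟩ := hi
      have := hiH.1; have := hiH.2
      omega
    · obtain ⟨q, hq⟩ := hdvd
      have : Even ((-j) % m n + m n + j) := by
        rw [show (-j) % m n + m n + j = m n * (q + 1) by linear_combination hq]
        exact hm.mul_right _
      exact Int.not_even_iff_odd.2 hj (Int.even_add.1 this |>.1 hi)
  rw [oplus_Hset_Hset (emod_add_m_mem_Hset _) hj hne,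
    show (-j) % m n + m n + j = (-j) % m n + j + m n by ring, Int.add_emod_right,
    Int.emod_add_emod, neg_add_cancel, Int.zero_emod]

lemma mem_Mset_iff {a b : ℤ} : (a, b) ∈ Mset n ↔
    (a ∈ OP n ∧ b ∈ Hset n) ∨ (a ∈ Hset n ∧ b ∈ OP n) ∨ (a ∈ EH n ∧ b ∈ OH n) ∨
      (a ∈ OH n ∧ b ∈ EH n) := by
  have ha := Int.not_even_iff_odd (n := a)
  have hb := Int.not_even_iff_odd (n := b)
  simp only [Mset, OP, OH, EH, Set.mem_union, Set.mem_prod, Set.mem_ofPred_eq]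
  tauto

lemma notMem_Mset_of_mem_Pset {a b : ℤ} (ha : a ∈ Pset n) (hb : b ∈ Pset n) :
    (a, b) ∉ Mset n := by
  rw [mem_Mset_iff]
  rintro (⟨-, h⟩ | ⟨h, -⟩ | ⟨h, -⟩ | ⟨h, -⟩)
  · exact notMem_Hset_of_mem_Pset hb h
  all_goals exact notMem_Hset_of_mem_Pset ha (by first | exact h | exact h.1)

lemma gyr_of_notMem_Mset {a b : ℤ} (h : (a, b) ∉ Mset n) (c : ℤ) : gyr n a b c = c := by
  rw [gyr, if_neg h]; rfl

lemma gyr_mem_Pset_union_Hset {a b c : ℤ} (hc : c ∈ Pset n ∪ Hset n) :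
    gyr n a b c ∈ Pset n ∪ Hset n := by
  rw [gyr]
  split_ifs
  · rw [Amap]
    split_ifs
    · exact Or.inl (emod_mem_Pset _)
    · exact Or.inr (emod_add_m_mem_Hset _)
    · exact hc
  · exact hc

lemma isSubgyrogroup_pMultiples {d : ℤ} (hd : d ∣ m n) : IsSubgyrogroup n (pMultiples n d) := by
  refine ⟨⟨⟨le_rfl, m_pos⟩, dvd_zero d⟩, ?_, ?_, ?_⟩
  · rintro a ⟨ha, had⟩ b ⟨hb, hbd⟩
    rw [oplus_Pset_Pset ha hb]
    exact ⟨emod_mem_Pset _, (dvd_emod_iff hd).2 (dvd_add had hbd)⟩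
  · rintro a ⟨ha, had⟩
    exact ⟨_, ⟨emod_mem_Pset _, (dvd_emod_iff hd).2 (dvd_neg.2 had)⟩, oplus_neg_emod_self ha⟩
  · rintro a ⟨ha, -⟩ b ⟨hb, -⟩ c hc
    rwa [gyr_of_notMem_Mset (notMem_Mset_of_mem_Pset ha hb)]

lemma isSubgyrogroup_Pset_union_Hset : IsSubgyrogroup n (Pset n ∪ Hset n) := by
  refine ⟨Or.inl ⟨le_rfl, m_pos⟩, fun a _ b _ => oplus_mem_Pset_union_Hset a b, ?_,
    fun a _ b _ c hc => gyr_mem_Pset_union_Hset hc⟩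
  rintro a (ha | ha)
  · exact ⟨_, Or.inl (emod_mem_Pset _), oplus_neg_emod_self ha⟩
  · exact ⟨_, Or.inr (emod_add_m_mem_Hset _), oplus_neg_emod_add_m_self ha⟩

section TwoDvd

variable {d c : ℤ}

lemma notMem_OP_of_mem_union (h2 : 2 ∣ d) {x : ℤ} (hx : x ∈ pMultiples n d ∪ hCoset n d c) :
    x ∉ OP n := by
  rintro ⟨hxP, hxo⟩
  rcases hx with ⟨-, hx⟩ | ⟨hx, -⟩
  · exact Int.not_even_iff_odd.2 hxo (even_iff_two_dvd.2 (h2.trans hx))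
  · exact notMem_Hset_of_mem_Pset hxP hx

lemma not_mem_EH_and_mem_OH_of_mem_union (h2 : 2 ∣ d) {x y : ℤ}
    (hx : x ∈ pMultiples n d ∪ hCoset n d c) (hy : y ∈ pMultiples n d ∪ hCoset n d c) :
    ¬(x ∈ EH n ∧ y ∈ OH n) := by
  rintro ⟨⟨hxH, hxe⟩, hyH, hyo⟩
  obtain ⟨-, hxd⟩ := hx.resolve_left fun h => notMem_Hset_of_mem_Pset h.1 hxH
  obtain ⟨-, hyd⟩ := hy.resolve_left fun h => notMem_Hset_of_mem_Pset h.1 hyH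
  have : Even (x - y) := even_iff_two_dvd.2 <| h2.trans <| by
    rw [show x - y = x - c - (y - c) by ring]
    exact dvd_sub hxd hyd
  exact Int.not_even_iff_odd.2 hyo ((Int.even_sub.1 this).1 hxe)

lemma oplus_mem_pMultiples_union_hCoset (hd : d ∣ m n) (h2 : 2 ∣ d) (hc : d ∣ 2 * c) {a b : ℤ}
    (ha : a ∈ pMultiples n d ∪ hCoset n d (m n + c))
    (hb : b ∈ pMultiples n d ∪ hCoset n d (m n + c)) :
    oplus n a b ∈ pMultiples n d ∪ hCoset n d (m n + c) := by
  have hne := not_mem_EH_and_mem_OH_of_mem_union h2 ha hb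
  have hbOP := notMem_OP_of_mem_union h2 hb
  rcases ha with ⟨haP, had⟩ | ⟨haH, had⟩ <;> rcases hb with ⟨hbP, hbd⟩ | ⟨hbH, hbd⟩
  · rw [oplus_Pset_Pset haP hbP]
    exact Or.inl ⟨emod_mem_Pset _, (dvd_emod_iff hd).2 (dvd_add had hbd)⟩
  · rw [oplus_Pset_Hset haP hbH]
    refine Or.inr (emod_add_m_mem_hCoset hd ?_)
    rw [show a + b - c = a + (b - (m n + c)) + m n by ring]
    exact dvd_add (dvd_add had hbd) hd
  · rw [oplus_Hset_Pset haH hbP fun h => hbOP h.2]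
    refine Or.inr (emod_add_m_mem_hCoset hd ?_)
    rw [show a + b - c = a - (m n + c) + b + m n by ring]
    exact dvd_add (dvd_add had hbd) hd
  · rw [oplus_Hset_Hset haH hbH hne]
    refine Or.inl ⟨emod_mem_Pset _, (dvd_emod_iff hd).2 ?_⟩
    rw [show a + b = a - (m n + c) + (b - (m n + c)) + 2 * m n + 2 * c by ring]
    exact dvd_add (dvd_add (dvd_add had hbd) (hd.mul_left 2)) hc

lemma isSubgyrogroup_pMultiples_union_hCoset_of_two_dvd (hd : d ∣ m n) (h2 : 2 ∣ d)
    (hc : d ∣ 2 * c) : IsSubgyrogroup n (pMultiples n d ∪ hCoset n d (m n + c)) := by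
  refine ⟨Or.inl ⟨⟨le_rfl, m_pos⟩, dvd_zero d⟩,
    fun a ha b hb => oplus_mem_pMultiples_union_hCoset hd h2 hc ha hb, ?_, ?_⟩
  · rintro a (⟨haP, had⟩ | ⟨haH, had⟩)
    · exact ⟨_, Or.inl ⟨emod_mem_Pset _, (dvd_emod_iff hd).2 (dvd_neg.2 had)⟩,
        oplus_neg_emod_self haP⟩
    · refine ⟨_, Or.inr (emod_add_m_mem_hCoset hd ?_), oplus_neg_emod_add_m_self haH⟩
      rw [show -a - c = -(a - (m n + c)) - m n - 2 * c by ring]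
      exact dvd_sub (dvd_sub (dvd_neg.2 had) hd) hc
  · intro a ha b hb x hx
    have hM : (a, b) ∉ Mset n := by
      rw [mem_Mset_iff]
      rintro (⟨h, -⟩ | ⟨-, h⟩ | h | h)
      · exact notMem_OP_of_mem_union h2 ha h
      · exact notMem_OP_of_mem_union h2 hb h
      · exact not_mem_EH_and_mem_OH_of_mem_union h2 ha hb h
      · exact not_mem_EH_and_mem_OH_of_mem_union h2 hb ha ⟨h.2, h.1⟩
    rwa [gyr_of_notMem_Mset hM]

end TwoDvd

lemma isSubgyrogroup_pMultiples_union_hCoset {σ : ℕ} {c : ℤ} (hσ : (2 : ℤ) ^ σ ∣ m n)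
    (hc : (2 : ℤ) ^ σ ∣ 2 * c) :
    IsSubgyrogroup n (pMultiples n (2 ^ σ) ∪ hCoset n (2 ^ σ) (m n + c)) := by
  rcases σ with _ | σ
  · rw [pow_zero, pMultiples_one, hCoset_one]
    exact isSubgyrogroup_Pset_union_Hset
  · exact isSubgyrogroup_pMultiples_union_hCoset_of_two_dvd hσ (dvd_pow_self 2 σ.succ_ne_zero) hc

lemma exists_eq_pMultiples_two_pow {S : Set ℤ} (hS : S ⊆ Pset n) (h0 : 0 ∈ S)
    (hadd : ∀ a ∈ S, ∀ b ∈ S, (a + b) % m n ∈ S) (hneg : ∀ a ∈ S, (-a) % m n ∈ S) :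
    ∃ s ≤ n - 1, S = pMultiples n (2 ^ s) := by
  let T : AddSubgroup ℤ :=
    { carrier := {x | x % m n ∈ S}
      zero_mem' := by
        show 0 % m n ∈ S
        rwa [Int.zero_emod]
      add_mem' := fun {x y} hx hy => by
        show (x + y) % m n ∈ S
        rw [Int.add_emod]
        exact hadd _ hx _ hy
      neg_mem' := fun {x} hx => by
        show (-x) % m n ∈ S
        rw [← (Int.mod_modEq x (m n)).neg]
        exact hneg _ hx }
  obtain ⟨s, hs, hT⟩ := T.exists_mem_iff_two_pow_dvd (k := n - 1) (by simpa [T, m] using h0)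
  refine ⟨s, hs, Set.ext fun x => ⟨fun hx => ⟨hS hx, ?_⟩, fun ⟨hx, hxd⟩ => ?_⟩⟩
  · refine (hT x).1 ?_
    show x % m n ∈ S
    rwa [Int.emod_eq_of_lt (hS hx).1 (hS hx).2]
  · have : x % m n ∈ S := (hT x).2 hxd
    rwa [Int.emod_eq_of_lt hx.1 hx.2] at this

end TwistedGyrogroup

namespace IsSubgyrogroup

open TwistedGyrogroup

variable {n : ℕ} {K : Set ℤ}

lemma neg_emod_mem (hK : IsSubgyrogroup n K) (hKG : K ⊆ Gset n) {a : ℤ} (ha : a ∈ K)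
    (haP : a ∈ Pset n) : (-a) % m n ∈ K := by
  obtain ⟨b, hb, hba⟩ := hK.2.2.1 a ha
  have hbP : b ∈ Pset n := (Gset_subset_Pset_union_Hset (hKG hb)).resolve_right fun hbH => by
    have := (oplus_mem_Hset_of_mem_Hset_of_mem_Pset hbH haP).1
    rw [hba] at this
    exact this.not_gt m_pos
  rw [oplus_Pset_Pset hbP haP] at hba
  have : b % m n = (-a) % m n := Int.emod_eq_emod_iff_emod_sub_eq_zero.2 (by rwa [sub_neg_eq_add])
  rwa [← this, Int.emod_eq_of_lt hbP.1 hbP.2]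

lemma exists_inter_Pset_eq (hK : IsSubgyrogroup n K) (hKG : K ⊆ Gset n) :
    ∃ s ≤ n - 1, K ∩ Pset n = pMultiples n (2 ^ s) :=
  exists_eq_pMultiples_two_pow Set.inter_subset_right ⟨hK.1, le_rfl, m_pos⟩
    (fun a ha b hb => ⟨by simpa only [oplus_Pset_Pset ha.2 hb.2] using hK.2.1 a ha.1 b hb.1,
      emod_mem_Pset _⟩)
    (fun a ha => ⟨hK.neg_emod_mem hKG ha.1 ha.2, emod_mem_Pset _⟩)

variable {d : ℤ}

lemma dvd_add_of_mem_Hset (hK : IsSubgyrogroup n K) (hd : d ∣ m n)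
    (hP : K ∩ Pset n = pMultiples n d) {x y : ℤ} (hx : x ∈ K) (hxH : x ∈ Hset n) (hy : y ∈ K)
    (hyH : y ∈ Hset n) : d ∣ x + y := by
  have hmem : (x + y) % m n ∈ K := by
    -- at most one of `x ⊕ y` and `y ⊕ x` is twisted
    by_cases htw : x ∈ EH n ∧ y ∈ OH n
    · have hne : ¬(y ∈ EH n ∧ x ∈ OH n) := fun h => Int.not_even_iff_odd.2 h.2.2 htw.1.2
      simpa only [oplus_Hset_Hset hyH hxH hne, add_comm y] using hK.2.1 y hy x hx
    · simpa only [oplus_Hset_Hset hxH hyH htw] using hK.2.1 x hx y hy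
  have : (x + y) % m n ∈ pMultiples n d := hP ▸ ⟨hmem, emod_mem_Pset _⟩
  exact (dvd_emod_iff hd).1 this.2

lemma inter_Hset_eq (hK : IsSubgyrogroup n K) (hd : d ∣ m n) (hP : K ∩ Pset n = pMultiples n d)
    {h : ℤ} (hh : h ∈ K) (hhH : h ∈ Hset n) : K ∩ Hset n = hCoset n d h := by
  ext x
  refine ⟨fun ⟨hx, hxH⟩ => ⟨hxH, ?_⟩, fun ⟨hxH, hxd⟩ => ⟨?_, hxH⟩⟩
  · rw [show x - h = x + h - (h + h) by ring]
    exact dvd_sub (hK.dvd_add_of_mem_Hset hd hP hx hxH hh hhH)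
      (hK.dvd_add_of_mem_Hset hd hP hh hhH hh hhH)
  · have hp : (x - h) % m n ∈ K ∩ Pset n := hP ▸ ⟨emod_mem_Pset _, (dvd_emod_iff hd).2 hxd⟩
    have := hK.2.1 _ hp.1 h hh
    rwa [oplus_Pset_Hset (emod_mem_Pset _) hhH, Int.emod_add_emod, sub_add_cancel,
      emod_m_eq_of_mem_Hset hxH, sub_add_cancel] at this

theorem eq_pMultiples_or_eq_union (hK : IsSubgyrogroup n K) (hKG : K ⊆ Gset n) :
    (∃ s ≤ n - 1, K = pMultiples n (2 ^ s)) ∨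
      (∃ s ≤ n - 1, K = pMultiples n (2 ^ s) ∪ hCoset n (2 ^ s) (m n)) ∨
      ∃ σ ≤ n - 2, K = pMultiples n (2 ^ (σ + 1)) ∪ hCoset n (2 ^ (σ + 1)) (m n + 2 ^ σ) := by
  obtain ⟨s, hs, hP⟩ := hK.exists_inter_Pset_eq hKG
  have hd := two_pow_dvd_m hs
  have hsplit : K = K ∩ Pset n ∪ K ∩ Hset n := by
    rw [← Set.inter_union_distrib_left, Set.inter_eq_left.2 (hKG.trans Gset_subset_Pset_union_Hset)]
  rcases (K ∩ Hset n).eq_empty_or_nonempty with hH | ⟨h, hh, hhH⟩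
  · exact Or.inl ⟨s, hs, by rw [hsplit, hH, Set.union_empty, hP]⟩
  rw [hsplit, hP, hK.inter_Hset_eq hd hP hh hhH]
  have h2 : (2 : ℤ) ^ s ∣ 2 * (h - m n) := by
    rw [mul_sub, two_mul h]
    exact dvd_sub (hK.dvd_add_of_mem_Hset hd hP hh hhH hh hhH) (hd.mul_left 2)
  rcases two_pow_dvd_or_of_dvd_two_mul h2 with hc | ⟨σ, rfl, hc⟩
  · exact Or.inr (Or.inl ⟨s, hs, by rw [hCoset_congr hc]⟩)
  · refine Or.inr (Or.inr ⟨σ, by omega, ?_⟩)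
    rw [hCoset_congr (c' := m n + 2 ^ σ) (by rwa [← sub_sub])]

end IsSubgyrogroup

open TwistedGyrogroup

/-- classification of the subgyrogroups of `(G, ⊕)`. -/
theorem stmt16 (n : ℕ) (hn : 3 ≤ n) (K : Set ℤ) (hK : K ⊆ Gset n) :
    IsSubgyrogroup n K ↔
      ((∃ s : ℕ, s ≤ n - 1 ∧ K = {x : ℤ | ∃ k : ℤ, x = (k * 2 ^ s) % m n}) ∨
        (∃ s : ℕ, s ≤ n - 1 ∧ K = {x : ℤ | ∃ k : ℤ, x = (k * 2 ^ s) % m n} ∪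
          {x : ℤ | ∃ k : ℤ, x = m n + (k * 2 ^ s) % m n}) ∨
        (∃ s : ℕ, s ≤ n - 2 ∧ K = {x : ℤ | ∃ k : ℤ, x = (k * 2 ^ (s + 1)) % m n} ∪
          {x : ℤ | ∃ k : ℤ, x = m n + (2 ^ s + k * 2 ^ (s + 1)) % m n})) := by
  have hA : ∀ s ≤ n - 1, {x : ℤ | ∃ k : ℤ, x = (k * 2 ^ s) % m n} = pMultiples n (2 ^ s) :=
    fun s hs => setOf_mul_emod_eq_pMultiples (two_pow_dvd_m hs)
  have hB : ∀ s ≤ n - 1,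
      {x : ℤ | ∃ k : ℤ, x = m n + (k * 2 ^ s) % m n} = hCoset n (2 ^ s) (m n) :=
    fun s hs => by simpa using setOf_add_mul_emod_eq_hCoset (two_pow_dvd_m hs) 0
  have hC : ∀ s ≤ n - 2, {x : ℤ | ∃ k : ℤ, x = m n + (2 ^ s + k * 2 ^ (s + 1)) % m n} =
      hCoset n (2 ^ (s + 1)) (m n + 2 ^ s) :=
    fun s hs => setOf_add_mul_emod_eq_hCoset (two_pow_dvd_m (by omega)) _
  constructor
  · intro hsub
    rcases hsub.eq_pMultiples_or_eq_union hK with ⟨s, hs, rfl⟩ | ⟨s, hs, rfl⟩ | ⟨s, hs, rfl⟩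
    · exact Or.inl ⟨s, hs, (hA s hs).symm⟩
    · exact Or.inr (Or.inl ⟨s, hs, by rw [hA s hs, hB s hs]⟩)
    · exact Or.inr (Or.inr ⟨s, hs, by rw [hA (s + 1) (by omega), hC s hs]⟩)
  · rintro (⟨s, hs, rfl⟩ | ⟨s, hs, rfl⟩ | ⟨s, hs, rfl⟩)
    · rw [hA s hs]
      exact isSubgyrogroup_pMultiples (two_pow_dvd_m hs)
    · rw [hA s hs, hB s hs]
      simpa using isSubgyrogroup_pMultiples_union_hCoset (c := 0) (two_pow_dvd_m hs) (by simp)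
    · rw [hA (s + 1) (by omega), hC s hs]
      exact isSubgyrogroup_pMultiples_union_hCoset (two_pow_dvd_m (by omega)) ⟨1, by ring⟩
end
end
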